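/- In the path category EFF, every fibration is a fibration of sets (i.e., a fibration of 0-types). -/

import Mathlib

namespace EffPaper

/-! ### A small kit for tracking by partial computable functions.

We encode "partial computable function" via Mathlib's `Partrec` on `ℕ →. ℕ`.
`CompComputes I O` says: there is a partial computable function which, on the input
`I x`, converges and outputs `O x` (for every `x` in some index type `X`).
`CompFinds I S` says: there is a partial computable function which, on the input
`I x`, converges and outputs some element of the set `S x`. -/

def CompComputes {X : Sort*} (I O : X → ℕ) : Prop :=
  ∃ F : ℕ →. ℕ, Partrec F ∧ ∀ x, O x ∈ F (I x)

def CompFinds {X : Sort*} (I : X → ℕ) (S : X → Set ℕ) : Prop :=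
  ∃ F : ℕ →. ℕ, Partrec F ∧ ∀ x, ∃ k, k ∈ F (I x) ∧ k ∈ S x

namespace CompComputes

protected theorem id {X : Sort*} (I : X → ℕ) : CompComputes I I :=
  ⟨fun n => Part.some n, Partrec.some, fun x => Part.mem_some _⟩

protected theorem const {X : Sort*} (I : X → ℕ) (c : ℕ) : CompComputes I fun _ => c :=
  ⟨fun _ => Part.some c, (Computable.const c).partrec, fun _ => Part.mem_some _⟩

protected theorem comp {X : Sort*} {I M O : X → ℕ}
    (h₂ : CompComputes M O) (h₁ : CompComputes I M) : CompComputes I O := by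
  obtain ⟨F₁, pF₁, s₁⟩ := h₁
  obtain ⟨F₂, pF₂, s₂⟩ := h₂
  refine ⟨fun n => (F₁ n).bind F₂, pF₁.bind (pF₂.comp Computable.snd), fun x => ?_⟩
  exact Part.mem_bind_iff.mpr ⟨M x, s₁ x, s₂ x⟩

protected theorem pair {X : Sort*} {I a b : X → ℕ}
    (ha : CompComputes I a) (hb : CompComputes I b) :
    CompComputes I (fun x => Nat.pair (a x) (b x)) := by
  obtain ⟨F₁, pF₁, s₁⟩ := ha
  obtain ⟨F₂, pF₂, s₂⟩ := hb
  refine ⟨fun n => (F₁ n).bind fun u => (F₂ n).map fun v => Nat.pair u v, ?_, fun x => ?_⟩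
  · refine pF₁.bind ?_
    have : Computable₂ fun (p : ℕ × ℕ) (v : ℕ) => Nat.pair p.2 v :=
      Primrec₂.to_comp (Primrec₂.natPair.comp (Primrec.snd.comp Primrec.fst) Primrec.snd)
    exact Partrec.map (pF₂.comp Computable.fst) this
  · exact Part.mem_bind_iff.mpr ⟨a x, s₁ x, (Part.mem_map_iff _).mpr ⟨b x, s₂ x, rfl⟩⟩

protected theorem unpairL {X : Sort*} (I : X → ℕ) :
    CompComputes I (fun x => (I x).unpair.1) :=
  ⟨fun n => Part.some n.unpair.1,
    (Primrec.to_comp (Primrec.fst.comp Primrec.unpair)).partrec, fun _ => Part.mem_some _⟩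

protected theorem unpairR {X : Sort*} (I : X → ℕ) :
    CompComputes I (fun x => (I x).unpair.2) :=
  ⟨fun n => Part.some n.unpair.2,
    (Primrec.to_comp (Primrec.snd.comp Primrec.unpair)).partrec, fun _ => Part.mem_some _⟩

protected theorem projL {X : Sort*} (a b : X → ℕ) :
    CompComputes (fun x => Nat.pair (a x) (b x)) a := by
  have := CompComputes.unpairL (X := X) (fun x => Nat.pair (a x) (b x))
  simpa [Nat.unpair_pair] using this

protected theorem projR {X : Sort*} (a b : X → ℕ) :
    CompComputes (fun x => Nat.pair (a x) (b x)) b := by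
  have := CompComputes.unpairR (X := X) (fun x => Nat.pair (a x) (b x))
  simpa [Nat.unpair_pair] using this

protected theorem precomp {X Y : Sort*} {I O : X → ℕ} (h : CompComputes I O) (e : Y → X) :
    CompComputes (fun y => I (e y)) (fun y => O (e y)) := by
  obtain ⟨F, pF, s⟩ := h
  exact ⟨F, pF, fun y => s (e y)⟩

protected theorem toFinds {X : Sort*} {I o : X → ℕ} {S : X → Set ℕ}
    (h : CompComputes I o) (hm : ∀ x, o x ∈ S x) : CompFinds I S := by
  obtain ⟨F, pF, s⟩ := h
  exact ⟨F, pF, fun x => ⟨o x, s x, hm x⟩⟩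

end CompComputes

namespace CompFinds

protected theorem toComputes {X : Sort*} {I : X → ℕ} {S : X → Set ℕ} (h : CompFinds I S) :
    ∃ o : X → ℕ, (∀ x, o x ∈ S x) ∧ CompComputes I o := by
  obtain ⟨F, pF, s⟩ := h
  refine ⟨fun x => (s x).choose, fun x => (s x).choose_spec.2, F, pF, fun x => (s x).choose_spec.1⟩

/-- Reindex a `CompFinds` along `e` and chase the input through a computable function. -/
protected theorem via {Y X : Sort*} {J : X → ℕ} {S : X → Set ℕ} (h : CompFinds J S)
    {I : Y → ℕ} (e : Y → X) (hc : CompComputes I (fun y => J (e y))) :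
    CompFinds I (fun y => S (e y)) := by
  obtain ⟨o, hm, hcc⟩ := h.toComputes
  exact CompComputes.toFinds ((hcc.precomp e).comp hc) (fun y => hm (e y))

end CompFinds

end EffPaper

namespace EffPaper

open CategoryTheory

universe v u

/-! ### Path categories (Van den Berg–Moerdijk style), abstractly.

A `PathStruct` on a category is a pair of classes of maps: fibrations and equivalences.
`IsPathCategory` expresses the seven axioms of a path category. -/

structure PathStruct (C : Type u) [Category.{v} C] where
  Fib : ∀ ⦃X Y : C⦄, (X ⟶ Y) → Prop
  Eqv : ∀ ⦃X Y : C⦄, (X ⟶ Y) → Prop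

section PathCatDefs

variable {C : Type u} [Category.{v} C]

/-- `T` is a terminal object. -/
def IsTerminalObj (T : C) : Prop := ∀ Z : C, ∃ f : Z ⟶ T, ∀ g : Z ⟶ T, g = f

/-- The square with projections `p₁, p₂` is a pullback of the cospan `f, g`. -/
def IsPB {P X Y Z : C} (p₁ : P ⟶ X) (p₂ : P ⟶ Y) (f : X ⟶ Z) (g : Y ⟶ Z) : Prop :=
  p₁ ≫ f = p₂ ≫ g ∧ ∀ (Q : C) (q₁ : Q ⟶ X) (q₂ : Q ⟶ Y), q₁ ≫ f = q₂ ≫ g →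
    ∃! h : Q ⟶ P, h ≫ p₁ = q₁ ∧ h ≫ p₂ = q₂

/-- `p₁, p₂` exhibit their common domain as a binary product of `X` and `Y`. -/
def IsBinProd {P X Y : C} (p₁ : P ⟶ X) (p₂ : P ⟶ Y) : Prop :=
  ∀ (Q : C) (q₁ : Q ⟶ X) (q₂ : Q ⟶ Y), ∃! h : Q ⟶ P, h ≫ p₁ = q₁ ∧ h ≫ p₂ = q₂

variable (S : PathStruct C)

/-- `X → PX → X × X` is a path object for `X`: the first map is an equivalence, the
second (the pairing of `s` and `t` into a binary product `X × X`) is a fibration,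
and the composite is the diagonal. -/
def IsPathObj {X PX : C} (r : X ⟶ PX) (s t : PX ⟶ X) : Prop :=
  S.Eqv r ∧ r ≫ s = 𝟙 X ∧ r ≫ t = 𝟙 X ∧
  ∃ (W : C) (π₁ π₂ : W ⟶ X) (h : PX ⟶ W),
    IsBinProd π₁ π₂ ∧ h ≫ π₁ = s ∧ h ≫ π₂ = t ∧ S.Fib h

/-- A path object for `p : X ⟶ I` in the slice path category `C(I)`:
a factorisation of the fibrewise diagonal `X ⟶ X ×_I X` as an equivalence `r`
followed by a fibration. -/
def IsRelPathObj {X I PX : C} (p : X ⟶ I) (r : X ⟶ PX) (s t : PX ⟶ X) : Prop :=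
  S.Eqv r ∧ r ≫ s = 𝟙 X ∧ r ≫ t = 𝟙 X ∧ s ≫ p = t ≫ p ∧
  ∃ (W : C) (π₁ π₂ : W ⟶ X) (h : PX ⟶ W),
    IsPB π₁ π₂ p p ∧ h ≫ π₁ = s ∧ h ≫ π₂ = t ∧ S.Fib h

/-- The seven axioms for a path category. -/
structure IsPathCategory : Prop where
  fib_of_iso : ∀ {X Y : C} (f : X ⟶ Y), IsIso f → S.Fib f
  fib_comp : ∀ {X Y Z : C} (f : X ⟶ Y) (g : Y ⟶ Z), S.Fib f → S.Fib g → S.Fib (f ≫ g)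
  terminal : ∃ T : C, IsTerminalObj T ∧ ∀ (X : C) (f : X ⟶ T), S.Fib f
  pullback : ∀ {X Y Z : C} (f : X ⟶ Z) (g : Y ⟶ Z), S.Fib f →
    ∃ (P : C) (p₁ : P ⟶ X) (p₂ : P ⟶ Y), IsPB p₁ p₂ f g ∧ S.Fib p₂
  eqv_of_iso : ∀ {X Y : C} (f : X ⟶ Y), IsIso f → S.Eqv f
  two_out_of_six : ∀ {X Y Z W : C} (f : X ⟶ Y) (g : Y ⟶ Z) (h : Z ⟶ W),
    S.Eqv (f ≫ g) → S.Eqv (g ≫ h) →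
    S.Eqv f ∧ S.Eqv g ∧ S.Eqv h ∧ S.Eqv (f ≫ g ≫ h)
  path_obj : ∀ X : C, ∃ (PX : C) (r : X ⟶ PX) (s t : PX ⟶ X), IsPathObj S r s t
  triv_fib_pb : ∀ {X Y Z P : C} (f : X ⟶ Z) (g : Y ⟶ Z) (p₁ : P ⟶ X) (p₂ : P ⟶ Y),
    S.Fib f → S.Eqv f → IsPB p₁ p₂ f g → S.Fib p₂ ∧ S.Eqv p₂
  triv_fib_sect : ∀ {X Y : C} (f : X ⟶ Y), S.Fib f → S.Eqv f → ∃ s : Y ⟶ X, s ≫ f = 𝟙 Y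

/-- Two parallel maps are homotopic: `(f,g)` factors through some path object. -/
def Homotopic {Z X : C} (f g : Z ⟶ X) : Prop :=
  ∃ (PX : C) (r : X ⟶ PX) (s t : PX ⟶ X), IsPathObj S r s t ∧
    ∃ H : Z ⟶ PX, H ≫ s = f ∧ H ≫ t = g

/-- `f` and `g` are fibrewise homotopic over the codomain of `p`:
`(f,g)` factors through some path object of `p` in the slice. -/
def FibHomotopic {Z X I : C} (p : X ⟶ I) (f g : Z ⟶ X) : Prop :=
  ∃ (PX : C) (r : X ⟶ PX) (s t : PX ⟶ X), IsRelPathObj S p r s t ∧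
    ∃ H : Z ⟶ PX, H ≫ s = f ∧ H ≫ t = g

/-- `IsNTypeFib S n f` says that `f` is a fibration of `(n-2)`-types; so `n = 0`
corresponds to hlevel `-2` (trivial fibrations), `n = 1` to propositions,
`n = 2` to sets and `n = 3` to groupoids. -/
def IsNTypeFib : ℕ → ∀ ⦃Y X : C⦄, (Y ⟶ X) → Prop
  | 0, _, _, f => S.Fib f ∧ S.Eqv f
  | n+1, Y, _, f => S.Fib f ∧ ∃ (PY W : C) (r : Y ⟶ PY) (s t : PY ⟶ Y)
      (π₁ π₂ : W ⟶ Y) (h : PY ⟶ W),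
      IsRelPathObj S f r s t ∧ IsPB π₁ π₂ f f ∧ h ≫ π₁ = s ∧ h ≫ π₂ = t ∧
      IsNTypeFib n h

/-- The (strictly) commutative square with vertical fibrations `g` (left) and `f` (right),
top `top` and bottom `bot`, is a homotopy pullback: the induced map to the actual
pullback is an equivalence. -/
def IsHomotopyPB {D Cc B A : C} (g : D ⟶ Cc) (top : D ⟶ B) (f : B ⟶ A) (bot : Cc ⟶ A) :
    Prop :=
  g ≫ bot = top ≫ f ∧ ∃ (P : C) (p₁ : P ⟶ Cc) (p₂ : P ⟶ B) (h : D ⟶ P),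
    IsPB p₁ p₂ bot f ∧ h ≫ p₁ = g ∧ h ≫ p₂ = top ∧ S.Eqv h

/-- A transport structure on the fibration `p : Y ⟶ X`, relative to the path object
`(PX, r, s, t)` and the pullback `(Q, q₁, q₂)` of `s : PX ⟶ X` along `p`:
a map `Γ : Y ×_X PX ⟶ Y` with `p ∘ Γ = t ∘ q₂` and `Γ ∘ (1_Y, r ∘ p) ≃_X 1_Y`. -/
def IsTransport {Y X PX Q : C} (p : Y ⟶ X) (r : X ⟶ PX) (s t : PX ⟶ X)
    (q₁ : Q ⟶ Y) (q₂ : Q ⟶ PX) (Γ : Q ⟶ Y) : Prop :=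
  Γ ≫ p = q₂ ≫ t ∧
  ∀ j : Y ⟶ Q, j ≫ q₁ = 𝟙 Y → j ≫ q₂ = p ≫ r → FibHomotopic S p (j ≫ Γ) (𝟙 Y)

/-- A fibration `p : Y ⟶ X` is univalent: whenever `f, g : Z ⟶ X` and
`w : f*p ⟶ g*p` is an equivalence over `Z`, there is a homotopy `H` from `f` to `g`
such that `w` is fibrewise homotopic over `Z` to the map induced by `H` and a
transport structure on `p`. -/
def Univalent {Y X : C} (p : Y ⟶ X) : Prop :=
  ∀ {Z Zf Zg : C} (f g : Z ⟶ X) (a₁ : Zf ⟶ Z) (a₂ : Zf ⟶ Y) (b₁ : Zg ⟶ Z) (b₂ : Zg ⟶ Y),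
    IsPB a₁ a₂ f p → IsPB b₁ b₂ g p →
    ∀ w : Zf ⟶ Zg, w ≫ b₁ = a₁ → S.Eqv w →
    ∃ (PX Q : C) (r : X ⟶ PX) (s t : PX ⟶ X) (q₁ : Q ⟶ Y) (q₂ : Q ⟶ PX) (Γ : Q ⟶ Y)
      (H : Z ⟶ PX) (k : Zf ⟶ Q) (w' : Zf ⟶ Zg),
      IsPathObj S r s t ∧ IsPB q₁ q₂ p s ∧ IsTransport S p r s t q₁ q₂ Γ ∧
      H ≫ s = f ∧ H ≫ t = g ∧
      k ≫ q₁ = a₂ ∧ k ≫ q₂ = a₁ ≫ H ∧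
      w' ≫ b₁ = a₁ ∧ w' ≫ b₂ = k ≫ Γ ∧
      FibHomotopic S b₁ w w'

/-- `π : E ⟶ U` is a representation for the class `Small`: it is small, and every
small fibration is a homotopy pullback of it. -/
def IsRepresentation (Small : ∀ ⦃X Y : C⦄, (X ⟶ Y) → Prop) {E U : C} (π : E ⟶ U) : Prop :=
  Small π ∧ ∀ ⦃B A : C⦄ (f : B ⟶ A), Small f →
    ∃ (c : A ⟶ U) (top : B ⟶ E), IsHomotopyPB S f top π c

/-- `M` is a good lift for the universal property of the homotopy Π-type
`(pE, u₁, u₂, ε)` of `g` along `f`, at the map `h : A ⟶ X` with chosen pullback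
`(Ah, v₁, v₂)` of `h` along `f` and `m : f*h ⟶ g` over `Y`. -/
def HPiLiftGood {Y X Z E F A Ah : C} (f : Y ⟶ X) (g : Z ⟶ Y) (pE : E ⟶ X)
    (u₁ : F ⟶ E) (u₂ : F ⟶ Y) (ε : F ⟶ Z)
    (h : A ⟶ X) (v₁ : Ah ⟶ A) (v₂ : Ah ⟶ Y) (m : Ah ⟶ Z) (M : A ⟶ E) : Prop :=
  M ≫ pE = h ∧ ∀ fM : Ah ⟶ F, fM ≫ u₁ = v₁ ≫ M → fM ≫ u₂ = v₂ →
    FibHomotopic S g (fM ≫ ε) m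

/-- `(pE, u₁, u₂, ε)` is a homotopy Π-type of the fibration `g : Z ⟶ Y` along the
fibration `f : Y ⟶ X`.  Here `pE : E ⟶ X` is the Π-fibration, `(F, u₁, u₂)` is a
pullback of `pE` along `f`, and `ε : f*pE ⟶ g` is the counit (a map over `Y`). -/
structure IsHPi {Y X Z E F : C} (f : Y ⟶ X) (g : Z ⟶ Y) (pE : E ⟶ X)
    (u₁ : F ⟶ E) (u₂ : F ⟶ Y) (ε : F ⟶ Z) : Prop where
  fib : S.Fib pE
  pb : IsPB u₁ u₂ pE f
  isOver : ε ≫ g = u₂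
  lift : ∀ {A Ah : C} (h : A ⟶ X) (v₁ : Ah ⟶ A) (v₂ : Ah ⟶ Y), IsPB v₁ v₂ h f →
    ∀ m : Ah ⟶ Z, m ≫ g = v₂ →
      ∃ M : A ⟶ E, HPiLiftGood S f g pE u₁ u₂ ε h v₁ v₂ m M
  unique : ∀ {A Ah : C} (h : A ⟶ X) (v₁ : Ah ⟶ A) (v₂ : Ah ⟶ Y), IsPB v₁ v₂ h f →
    ∀ m : Ah ⟶ Z, m ≫ g = v₂ → ∀ M M' : A ⟶ E,
      HPiLiftGood S f g pE u₁ u₂ ε h v₁ v₂ m M →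
      HPiLiftGood S f g pE u₁ u₂ ε h v₁ v₂ m M' →
      FibHomotopic S pE M M'

/-- The path category has homotopy Π-types. -/
def HasHPi : Prop := ∀ ⦃Y X Z : C⦄ (f : Y ⟶ X) (g : Z ⟶ Y), S.Fib f → S.Fib g →
  ∃ (E F : C) (pE : E ⟶ X) (u₁ : F ⟶ E) (u₂ : F ⟶ Y) (ε : F ⟶ Z),
    IsHPi S f g pE u₁ u₂ ε

/-- A class of small fibrations: contained in the fibrations, containing all
isomorphisms, closed under composition and stable under homotopy pullback. -/
def IsSmallClass (Small : ∀ ⦃X Y : C⦄, (X ⟶ Y) → Prop) : Prop :=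
  (∀ ⦃X Y : C⦄ (f : X ⟶ Y), Small f → S.Fib f) ∧
  (∀ ⦃X Y : C⦄ (f : X ⟶ Y), IsIso f → Small f) ∧
  (∀ ⦃X Y Z : C⦄ (f : X ⟶ Y) (g : Y ⟶ Z), Small f → Small g → Small (f ≫ g)) ∧
  (∀ ⦃D Cc B A : C⦄ (g : D ⟶ Cc) (top : D ⟶ B) (f : B ⟶ A) (bot : Cc ⟶ A),
    S.Fib g → S.Fib f → Small f → IsHomotopyPB S g top f bot → Small g)

/-- The class `Small` is closed under homotopy Π-types along arbitrary fibrations: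
it is impredicative (polymorphic). -/
def ClosedUnderHPi (Small : ∀ ⦃X Y : C⦄, (X ⟶ Y) → Prop) : Prop :=
  ∀ ⦃Y X Z : C⦄ (f : Y ⟶ X) (g : Z ⟶ Y), S.Fib f → Small g →
    ∀ ⦃E F : C⦄ (pE : E ⟶ X) (u₁ : F ⟶ E) (u₂ : F ⟶ Y) (ε : F ⟶ Z),
      IsHPi S f g pE u₁ u₂ ε → Small pE

end PathCatDefs

end EffPaper
open CategoryTheory
namespace EffPaper
-- [assume p1 kit present]

/-! ### The category `EFF`. -/

/-- An object of `EFF`: a set `A`, a realizer function `α : A → ℕ`, sets of 1-cells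
`hom a a' ⊆ ℕ`, and partial computable functions computing identity, inverse and
composite 1-cells from the realizers of the relevant data. -/
structure EffObj : Type 1 where
  A : Type
  α : A → ℕ
  hom : A → A → Set ℕ
  idc : CompFinds (fun a : A => α a) (fun a => hom a a)
  invc : CompFinds
    (fun x : {p : A × A × ℕ // p.2.2 ∈ hom p.1 p.2.1} =>
      Nat.pair (α x.1.1) (Nat.pair (α x.1.2.1) x.1.2.2))
    (fun x => hom x.1.2.1 x.1.1)
  compc : CompFinds
    (fun x : {p : A × A × A × ℕ × ℕ //
        p.2.2.2.1 ∈ hom p.1 p.2.1 ∧ p.2.2.2.2 ∈ hom p.2.1 p.2.2.1} =>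
      Nat.pair (α x.1.1) (Nat.pair (α x.1.2.1) (Nat.pair (α x.1.2.2.1)
        (Nat.pair x.1.2.2.2.1 x.1.2.2.2.2))))
    (fun x => hom x.1.1 x.1.2.2.1)

/-- The 1-cells of an object of `EFF` between `a` and `a'`. -/
def EffObj.Cell (A : EffObj) (a a' : A.A) : Type := {n : ℕ // n ∈ A.hom a a'}

/-- A morphism of `EFF`: a function on 0-cells and functions on 1-cells, both
computably tracked. -/
structure EffHom (B A : EffObj) : Type where
  f0 : B.A → A.A
  f1 : ∀ b b' : B.A, B.Cell b b' → A.Cell (f0 b) (f0 b')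
  tr0 : CompComputes (fun b : B.A => B.α b) (fun b => A.α (f0 b))
  tr1 : CompComputes
    (fun x : (b : B.A) × (b' : B.A) × B.Cell b b' =>
      Nat.pair (B.α x.1) (Nat.pair (B.α x.2.1) x.2.2.val))
    (fun x => (f1 x.1 x.2.1 x.2.2).val)

instance : Category.{0} EffObj where
  Hom B A := EffHom B A
  id A :=
    { f0 := fun a => a
      f1 := fun _ _ π => π
      tr0 := CompComputes.id _
      tr1 := (CompComputes.projR _ _).comp (CompComputes.projR _ _) }
  comp {X Y Z} f g :=
    { f0 := fun b => g.f0 (f.f0 b)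
      f1 := fun b b' π => g.f1 _ _ (f.f1 b b' π)
      tr0 := (g.tr0.precomp f.f0).comp f.tr0
      tr1 := by
        have hg := g.tr1.precomp
          (fun x : (b : X.A) × (b' : X.A) × X.Cell b b' =>
            (⟨f.f0 x.1, f.f0 x.2.1, f.f1 x.1 x.2.1 x.2.2⟩ :
              (b : Y.A) × (b' : Y.A) × Y.Cell b b'))
        refine hg.comp ?_
        refine CompComputes.pair ?_ (CompComputes.pair ?_ f.tr1)
        · exact (f.tr0.precomp (fun x : (b : X.A) × (b' : X.A) × X.Cell b b' => x.1)).comp (CompComputes.projL _ _)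
        · exact (f.tr0.precomp (fun x : (b : X.A) × (b' : X.A) × X.Cell b b' => x.2.1)).comp
            ((CompComputes.projL _ _).comp (CompComputes.projR _ _)) }

end EffPaper
namespace EffPaper
open CategoryTheory

/-! ### Homotopies, equivalences and fibrations in `EFF`. -/

/-- Two parallel maps in `EFF` are homotopic if there is a partial computable function
computing, from the realizer of each `b`, a 1-cell from `f b` to `g b`. -/
def EffHomotopic {B A : EffObj} (f g : EffHom B A) : Prop :=
  CompFinds (fun b : B.A => B.α b) (fun b => A.hom (f.f0 b) (g.f0 b))

/-- A map in `EFF` is a (homotopy) equivalence if it has a homotopy inverse. -/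
def EffEqv {B A : EffObj} (f : B ⟶ A) : Prop :=
  ∃ g : A ⟶ B, EffHomotopic (f ≫ g) (𝟙 B) ∧ EffHomotopic (g ≫ f) (𝟙 A)

/-- A map in `EFF` is a fibration: (i) 1-cells `π : f b → a` downstairs can be
computably lifted to 1-cells `ρ : b → b'` upstairs with `f b' = a`, `f ρ = π`;
(ii) given `ρ ∈ ℬ(b,b')` and `π ∈ 𝒜(fb,fb')` one can compute `ρ' ∈ ℬ(b,b')`
with `f ρ' = π`. -/
def EffFib {B A : EffObj} (f : B ⟶ A) : Prop :=
  (∃ φ ψ : ℕ →. ℕ, Partrec φ ∧ Partrec ψ ∧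
    ∀ (b : B.A) (a : A.A) (π : ℕ), π ∈ A.hom (f.f0 b) a →
      ∃ (b' : B.A) (ρ : B.Cell b b'),
        f.f0 b' = a ∧ (f.f1 b b' ρ).val = π ∧
        B.α b' ∈ φ (Nat.pair (B.α b) (Nat.pair (A.α a) π)) ∧
        ρ.val ∈ ψ (Nat.pair (B.α b) (Nat.pair (A.α a) π))) ∧
  (∃ χ : ℕ →. ℕ, Partrec χ ∧
    ∀ (b b' : B.A) (ρ : B.Cell b b') (π : ℕ), π ∈ A.hom (f.f0 b) (f.f0 b') →
      ∃ ρ' : B.Cell b b', (f.f1 b b' ρ').val = π ∧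
        ρ'.val ∈ χ (Nat.pair (B.α b) (Nat.pair (B.α b') (Nat.pair ρ.val π))))

/-- The path structure on `EFF`: fibrations and (homotopy) equivalences. -/
def EffPS : PathStruct EffObj where
  Fib := fun {_ _} f => EffFib f
  Eqv := fun {_ _} f => EffEqv f

/-- A fibration in `EFF` is a standard discrete fibration if elements of the domain
are determined by their image and their realizer. -/
def EffStdDisc {B A : EffObj} (f : B ⟶ A) : Prop :=
  EffFib f ∧ ∀ b b' : B.A, f.f0 b = f.f0 b' → B.α b = B.α b' → b = b'

/-- A fibration in `EFF` is discrete if it can be written as a standard discrete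
fibration after an equivalence. -/
def EffDisc {B A : EffObj} (f : B ⟶ A) : Prop :=
  EffFib f ∧ ∃ (B' : EffObj) (w : B ⟶ B') (g : B' ⟶ A),
    EffEqv w ∧ EffStdDisc g ∧ w ≫ g = f

end EffPaper

/-!
In `EFF` the fibrewise path object of a fibration `g : Y ⟶ X` can be taken to consist of
triples `(y, y', ρ)` with `g y = g y'` and `ρ : y → y'`, whose cells are just the cells of
`(y, y')` in `Y ×_X Y`. Its fibration `P_X(Y) ⟶ Y ×_X Y` is therefore fibrewise connected:
two points over the same pair are joined by an identity cell. For a fibrewise connected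
fibration, choosing such cells gives a computable section of the path fibration which is a
homotopy inverse, so the path fibration is trivial and the fibration is propositional.
Applying this to the path fibration of an arbitrary fibration, every fibration is a
fibration of sets.
-/

namespace EffPaper

namespace CompComputes

variable {X : Sort*} {I a b : X → ℕ}

protected theorem left (h : CompComputes I fun x => Nat.pair (a x) (b x)) : CompComputes I a :=
  (CompComputes.projL a b).comp h

protected theorem right (h : CompComputes I fun x => Nat.pair (a x) (b x)) : CompComputes I b :=
  (CompComputes.projR a b).comp h

protected theorem unpair_fst (h : CompComputes I a) : CompComputes I fun x => (a x).unpair.1 :=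
  (CompComputes.unpairL a).comp h

protected theorem unpair_snd (h : CompComputes I a) : CompComputes I fun x => (a x).unpair.2 :=
  (CompComputes.unpairR a).comp h

end CompComputes

theorem CompFinds.mono {X : Sort*} {I : X → ℕ} {S S' : X → Set ℕ} (h : CompFinds I S)
    (hS : ∀ x, S x ⊆ S' x) : CompFinds I S' := by
  obtain ⟨F, hF, hFS⟩ := h
  exact ⟨F, hF, fun x => (hFS x).imp fun _ hk => ⟨hk.1, hS x hk.2⟩⟩

theorem EffHom.hom_ext {B A : EffObj} {f g : EffHom B A} (h₀ : ∀ b, f.f0 b = g.f0 b)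
    (h₁ : ∀ b b' ρ, (f.f1 b b' ρ).val = (g.f1 b b' ρ).val) : f = g := by
  cases f; cases g
  obtain rfl := funext h₀
  obtain rfl := funext fun b => funext fun b' => funext fun ρ => Subtype.ext (h₁ b b' ρ)
  rfl

theorem EffObj.hom_congr {Z : EffObj} {a a' b b' : Z.A} (ea : a = a') (eb : b = b') {n : ℕ}
    (h : n ∈ Z.hom a b) : n ∈ Z.hom a' b' := ea ▸ eb ▸ h

section Tracking

variable {T : Sort*} {I : T → ℕ}

namespace EffObj

variable (Y : EffObj) {b b' b'' : T → Y.A}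

theorem id_finds (cb : CompComputes I fun t => Y.α (b t)) :
    CompFinds I fun t => Y.hom (b t) (b t) :=
  Y.idc.via b cb

theorem inv_finds {ρ : T → ℕ} (hρ : ∀ t, ρ t ∈ Y.hom (b t) (b' t))
    (cb : CompComputes I fun t => Y.α (b t)) (cb' : CompComputes I fun t => Y.α (b' t))
    (cρ : CompComputes I ρ) : CompFinds I fun t => Y.hom (b' t) (b t) :=
  Y.invc.via (fun t => ⟨(b t, b' t, ρ t), hρ t⟩) (cb.pair (cb'.pair cρ))

theorem comp_finds {ρ ρ' : T → ℕ} (hρ : ∀ t, ρ t ∈ Y.hom (b t) (b' t))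
    (hρ' : ∀ t, ρ' t ∈ Y.hom (b' t) (b'' t))
    (cb : CompComputes I fun t => Y.α (b t)) (cb' : CompComputes I fun t => Y.α (b' t))
    (cb'' : CompComputes I fun t => Y.α (b'' t)) (cρ : CompComputes I ρ)
    (cρ' : CompComputes I ρ') : CompFinds I fun t => Y.hom (b t) (b'' t) :=
  Y.compc.via (fun t => ⟨(b t, b' t, b'' t, ρ t, ρ' t), hρ t, hρ' t⟩)
    (cb.pair (cb'.pair (cb''.pair (cρ.pair cρ'))))

theorem conj_finds {a a' c c' : T → Y.A} {μ ρ ν : T → ℕ}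
    (hμ : ∀ t, μ t ∈ Y.hom (a t) (a' t))
    (hρ : ∀ t, ρ t ∈ Y.hom (a t) (c t)) (hν : ∀ t, ν t ∈ Y.hom (c t) (c' t))
    (ca : CompComputes I fun t => Y.α (a t)) (ca' : CompComputes I fun t => Y.α (a' t))
    (cc : CompComputes I fun t => Y.α (c t)) (cc' : CompComputes I fun t => Y.α (c' t))
    (cμ : CompComputes I μ) (cρ : CompComputes I ρ) (cν : CompComputes I ν) :
    CompFinds I fun t => Y.hom (a' t) (c' t) := by
  obtain ⟨μ', hμ', cμ'⟩ := (Y.inv_finds hμ ca ca' cμ).toComputes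
  obtain ⟨ρμ', hρμ', cρμ'⟩ := (Y.comp_finds hμ' hρ ca' ca cc cμ' cρ).toComputes
  exact Y.comp_finds hρμ' hν ca' cc cc' cρμ' cν

end EffObj

noncomputable def EffObj.idCell (Y : EffObj) (y : Y.A) : Y.Cell y y :=
  ⟨Y.idc.toComputes.choose y, Y.idc.toComputes.choose_spec.1 y⟩

theorem EffObj.idCell_computes (Y : EffObj) : CompComputes Y.α fun y => (Y.idCell y).val :=
  Y.idc.toComputes.choose_spec.2

variable {Y X : EffObj} {b b' : T → Y.A}

theorem EffHom.f1_computes (g : Y ⟶ X) {ρ : T → ℕ} (hρ : ∀ t, ρ t ∈ Y.hom (b t) (b' t))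
    (cb : CompComputes I fun t => Y.α (b t)) (cb' : CompComputes I fun t => Y.α (b' t))
    (cρ : CompComputes I ρ) : CompComputes I fun t => (g.f1 (b t) (b' t) ⟨ρ t, hρ t⟩).val :=
  (g.tr1.precomp fun t =>
    (⟨b t, b' t, ⟨ρ t, hρ t⟩⟩ : (b : Y.A) × (b' : Y.A) × Y.Cell b b')).comp
      (cb.pair (cb'.pair cρ))

theorem EffFib.exists_cell_lift {g : Y ⟶ X} (hg : EffFib g) {ρ π : T → ℕ}
    (hρ : ∀ t, ρ t ∈ Y.hom (b t) (b' t))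
    (hπ : ∀ t, π t ∈ X.hom (g.f0 (b t)) (g.f0 (b' t)))
    (cb : CompComputes I fun t => Y.α (b t)) (cb' : CompComputes I fun t => Y.α (b' t))
    (cρ : CompComputes I ρ) (cπ : CompComputes I π) :
    ∃ (ρ' : T → ℕ) (hρ' : ∀ t, ρ' t ∈ Y.hom (b t) (b' t)),
      (∀ t, (g.f1 (b t) (b' t) ⟨ρ' t, hρ' t⟩).val = π t) ∧ CompComputes I ρ' := by
  obtain ⟨χ, hχ, hlift⟩ := hg.2
  choose ρ' hρ'π hρ'χ using fun t => hlift (b t) (b' t) ⟨ρ t, hρ t⟩ (π t) (hπ t)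
  have : CompComputes (fun t => Nat.pair (Y.α (b t)) (Nat.pair (Y.α (b' t))
      (Nat.pair (ρ t) (π t)))) fun t => (ρ' t).val := ⟨χ, hχ, hρ'χ⟩
  exact ⟨fun t => (ρ' t).val, fun t => (ρ' t).property, hρ'π,
    this.comp (cb.pair (cb'.pair (cρ.pair cπ)))⟩

end Tracking

section Pullback

variable {Y X : EffObj} (g : Y ⟶ X)

def pairHom (y y' z z' : Y.A) : Set ℕ :=
  {n | ∃ (h₁ : n.unpair.1 ∈ Y.hom y z) (h₂ : n.unpair.2 ∈ Y.hom y' z'),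
    (g.f1 y z ⟨_, h₁⟩).val = (g.f1 y' z' ⟨_, h₂⟩).val}

variable {g}

theorem pair_mem_pairHom {y y' z z' : Y.A} {μ ν : ℕ} (hμ : μ ∈ Y.hom y z)
    (hν : ν ∈ Y.hom y' z')
    (he : (g.f1 y z ⟨μ, hμ⟩).val = (g.f1 y' z' ⟨ν, hν⟩).val) :
    Nat.pair μ ν ∈ pairHom g y y' z z' := by
  simp only [pairHom, Set.mem_ofPred_eq, Nat.unpair_pair]
  exact ⟨hμ, hν, he⟩

/-- The second component is re-lifted along `g` so that its image is that of the first. -/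
theorem EffFib.pairHom_finds (hg : EffFib g) {T : Sort*} {I : T → ℕ} {y y' z z' : T → Y.A}
    (hy : ∀ t, g.f0 (y t) = g.f0 (y' t)) (hz : ∀ t, g.f0 (z t) = g.f0 (z' t))
    (cy : CompComputes I fun t => Y.α (y t)) (cy' : CompComputes I fun t => Y.α (y' t))
    (cz : CompComputes I fun t => Y.α (z t)) (cz' : CompComputes I fun t => Y.α (z' t))
    (hμ : CompFinds I fun t => Y.hom (y t) (z t))
    (hν : CompFinds I fun t => Y.hom (y' t) (z' t)) :
    CompFinds I fun t => pairHom g (y t) (y' t) (z t) (z' t) := by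
  obtain ⟨μ, hμ, cμ⟩ := hμ.toComputes
  obtain ⟨ν, hν, cν⟩ := hν.toComputes
  obtain ⟨ν', hν', hν'μ, cν'⟩ := hg.exists_cell_lift hν
    (fun t => EffObj.hom_congr (hy t) (hz t) (g.f1 _ _ ⟨μ t, hμ t⟩).property)
    cy' cz' cν (g.f1_computes hμ cy cz cμ)
  exact (cμ.pair cν').toFinds fun t => pair_mem_pairHom (hμ t) (hν' t) (hν'μ t).symm

variable (g) (hg : EffFib g)

def pullbackObj : EffObj where
  A := {p : Y.A × Y.A // g.f0 p.1 = g.f0 p.2}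
  α p := Nat.pair (Y.α p.val.1) (Y.α p.val.2)
  hom p q := pairHom g p.val.1 p.val.2 q.val.1 q.val.2
  idc := by
    refine hg.pairHom_finds (fun p => p.2) (fun p => p.2) ?_ ?_ ?_ ?_
      (Y.id_finds ?_) (Y.id_finds ?_)
    all_goals first | exact (CompComputes.id _).left | exact (CompComputes.id _).right
  invc := by
    refine hg.pairHom_finds (fun x => x.1.2.1.2) (fun x => x.1.1.2) ?_ ?_ ?_ ?_
      (Y.inv_finds (fun x => x.2.fst) ?_ ?_ ?_) (Y.inv_finds (fun x => x.2.snd.fst) ?_ ?_ ?_)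
    · exact (CompComputes.id _).right.left.left
    · exact (CompComputes.id _).right.left.right
    · exact (CompComputes.id _).left.left
    · exact (CompComputes.id _).left.right
    · exact (CompComputes.id _).left.left
    · exact (CompComputes.id _).right.left.left
    · exact (CompComputes.id _).right.right.unpair_fst
    · exact (CompComputes.id _).left.right
    · exact (CompComputes.id _).right.left.right
    · exact (CompComputes.id _).right.right.unpair_snd
  compc := by
    refine hg.pairHom_finds (fun x => x.1.1.2) (fun x => x.1.2.2.1.2) ?_ ?_ ?_ ?_
      (Y.comp_finds (fun x => x.2.1.fst) (fun x => x.2.2.fst) ?_ ?_ ?_ ?_ ?_)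
      (Y.comp_finds (fun x => x.2.1.snd.fst) (fun x => x.2.2.snd.fst) ?_ ?_ ?_ ?_ ?_)
    · exact (CompComputes.id _).left.left
    · exact (CompComputes.id _).left.right
    · exact (CompComputes.id _).right.right.left.left
    · exact (CompComputes.id _).right.right.left.right
    · exact (CompComputes.id _).left.left
    · exact (CompComputes.id _).right.left.left
    · exact (CompComputes.id _).right.right.left.left
    · exact (CompComputes.id _).right.right.right.left.unpair_fst
    · exact (CompComputes.id _).right.right.right.right.unpair_fst
    · exact (CompComputes.id _).left.right
    · exact (CompComputes.id _).right.left.right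
    · exact (CompComputes.id _).right.right.left.right
    · exact (CompComputes.id _).right.right.right.left.unpair_snd
    · exact (CompComputes.id _).right.right.right.right.unpair_snd

def pullbackFst : pullbackObj g hg ⟶ Y where
  f0 p := p.val.1
  f1 _ _ n := ⟨_, n.property.fst⟩
  tr0 := (CompComputes.id _).left
  tr1 := (CompComputes.id _).right.right.unpair_fst

def pullbackSnd : pullbackObj g hg ⟶ Y where
  f0 p := p.val.2
  f1 _ _ n := ⟨_, n.property.snd.fst⟩
  tr0 := (CompComputes.id _).right
  tr1 := (CompComputes.id _).right.right.unpair_snd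

theorem pullback_condition : pullbackFst g hg ≫ g = pullbackSnd g hg ≫ g :=
  EffHom.hom_ext (fun p => p.property) fun _ _ n => n.property.snd.snd

variable {g hg} in
def pullbackLift {Q : EffObj} (q₁ q₂ : Q ⟶ Y) (hq : q₁ ≫ g = q₂ ≫ g) :
    Q ⟶ pullbackObj g hg where
  f0 b := ⟨(q₁.f0 b, q₂.f0 b), congrArg (fun m : Q ⟶ X => m.f0 b) hq⟩
  f1 b b' ρ := ⟨_, pair_mem_pairHom (q₁.f1 b b' ρ).property (q₂.f1 b b' ρ).property
    (congrArg (fun m : Q ⟶ X => (m.f1 b b' ρ).val) hq)⟩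
  tr0 := q₁.tr0.pair q₂.tr0
  tr1 := q₁.tr1.pair q₂.tr1

theorem isPB_pullbackObj : IsPB (pullbackFst g hg) (pullbackSnd g hg) g g := by
  refine ⟨pullback_condition g hg, fun Q q₁ q₂ hq =>
    ⟨pullbackLift q₁ q₂ hq, ⟨?_, ?_⟩, ?_⟩⟩
  · exact EffHom.hom_ext (fun _ => rfl) fun _ _ _ => congrArg Prod.fst (Nat.unpair_pair _ _)
  · exact EffHom.hom_ext (fun _ => rfl) fun _ _ _ => congrArg Prod.snd (Nat.unpair_pair _ _)
  · rintro v ⟨rfl, rfl⟩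
    exact EffHom.hom_ext (fun _ => rfl) fun _ _ _ => (Nat.pair_unpair _).symm

end Pullback

def EffFibrewiseConnected {B A : EffObj} (f : B ⟶ A) : Prop :=
  CompFinds (fun q : {q : B.A × B.A // f.f0 q.1 = f.f0 q.2} =>
    Nat.pair (B.α q.val.1) (B.α q.val.2)) fun q => B.hom q.val.1 q.val.2

namespace EffObj

variable (W : EffObj) {T : Type} (p : T → W.A) (β : T → ℕ)
  (hβ : CompComputes β fun t => W.α (p t))

def induced : EffObj where
  A := T
  α := β
  hom t t' := W.hom (p t) (p t')
  idc := W.id_finds hβ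
  invc := by
    refine W.inv_finds (fun x => x.2) ?_ ?_ (CompComputes.id _).right.right
    · exact (hβ.precomp _).comp (CompComputes.id _).left
    · exact (hβ.precomp _).comp (CompComputes.id _).right.left
  compc := by
    refine W.comp_finds (fun x => x.2.1) (fun x => x.2.2) ?_ ?_ ?_
      (CompComputes.id _).right.right.right.left (CompComputes.id _).right.right.right.right
    · exact (hβ.precomp _).comp (CompComputes.id _).left
    · exact (hβ.precomp _).comp (CompComputes.id _).right.left
    · exact (hβ.precomp _).comp (CompComputes.id _).right.right.left

def inducedHom : W.induced p β hβ ⟶ W where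
  f0 := p
  f1 _ _ ρ := ρ
  tr0 := hβ
  tr1 := (CompComputes.id _).right.right

theorem fibrewiseConnected_inducedHom : EffFibrewiseConnected (W.inducedHom p β hβ) :=
  (W.id_finds ((hβ.precomp _).comp (CompComputes.id _).left)).mono fun q _ =>
    hom_congr rfl q.property

theorem effFib_inducedHom
    (lift : {x : T × W.A × ℕ // x.2.2 ∈ W.hom (p x.1) x.2.1} → T)
    (hlift : ∀ x, p (lift x) = x.val.2.1)
    (clift : CompComputes (fun x => Nat.pair (β x.val.1) (Nat.pair (W.α x.val.2.1) x.val.2.2))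
      fun x => β (lift x)) :
    EffFib (W.inducedHom p β hβ) := by
  obtain ⟨φ, hφ, hφlift⟩ := clift
  obtain ⟨ψ, hψ, hψπ⟩ : CompComputes (fun n => n) fun n => n.unpair.2.unpair.2 :=
    (CompComputes.id _).unpair_snd.unpair_snd
  obtain ⟨χ, hχ, hχπ⟩ : CompComputes (fun n => n) fun n => n.unpair.2.unpair.2.unpair.2 :=
    (CompComputes.id _).unpair_snd.unpair_snd.unpair_snd
  refine ⟨⟨φ, ψ, hφ, hψ, fun b a π hπ => ?_⟩, ⟨χ, hχ, fun b b' ρ π hπ => ?_⟩⟩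
  · let x : {x : T × W.A × ℕ // x.2.2 ∈ W.hom (p x.1) x.2.1} := ⟨(b, a, π), hπ⟩
    refine ⟨lift x, ⟨π, hom_congr rfl (hlift x).symm hπ⟩, hlift x, rfl, hφlift x, ?_⟩
    have := hψπ (Nat.pair (β b) (Nat.pair (W.α a) π))
    simp only [Nat.unpair_pair] at this
    exact this
  · refine ⟨⟨π, hπ⟩, rfl, ?_⟩
    have := hχπ (Nat.pair (β b) (Nat.pair (β b') (Nat.pair ρ.val π)))
    simp only [Nat.unpair_pair] at this
    exact this

theorem effEqv_inducedHom (s : W.A → T) (hs : ∀ w, p (s w) = w)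
    (cs : CompComputes W.α fun w => β (s w)) : EffEqv (W.inducedHom p β hβ) := by
  let k : W ⟶ W.induced p β hβ :=
    { f0 := s
      f1 w w' ρ := ⟨ρ.val, hom_congr (hs w).symm (hs w').symm ρ.property⟩
      tr0 := cs
      tr1 := (CompComputes.id _).right.right }
  refine ⟨k, ?_, ?_⟩
  · exact (W.id_finds hβ).mono fun t _ => hom_congr (hs (p t)).symm rfl
  · exact W.idc.mono fun w _ => hom_congr (hs w).symm rfl

end EffObj

section PathObject

variable {Y X : EffObj} (g : Y ⟶ X) (hg : EffFib g)

def pathObj : EffObj :=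
  (pullbackObj g hg).induced (T := (w : (pullbackObj g hg).A) × Y.Cell w.val.1 w.val.2)
    Sigma.fst (fun q => Nat.pair ((pullbackObj g hg).α q.1) q.2.val) (CompComputes.id _).left

def pathFib : pathObj g hg ⟶ pullbackObj g hg := EffObj.inducedHom _ _ _ _

noncomputable def pathRefl : Y ⟶ pathObj g hg where
  f0 y := ⟨⟨(y, y), rfl⟩, Y.idCell y⟩
  f1 _ _ μ := ⟨_, pair_mem_pairHom μ.property μ.property rfl⟩
  tr0 := ((CompComputes.id _).pair (CompComputes.id _)).pair Y.idCell_computes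
  tr1 := (CompComputes.id _).right.right.pair (CompComputes.id _).right.right

theorem pathRefl_fst : pathRefl g hg ≫ pathFib g hg ≫ pullbackFst g hg = 𝟙 Y :=
  EffHom.hom_ext (fun _ => rfl) fun _ _ _ => congrArg Prod.fst (Nat.unpair_pair _ _)

theorem pathRefl_snd : pathRefl g hg ≫ pathFib g hg ≫ pullbackSnd g hg = 𝟙 Y :=
  EffHom.hom_ext (fun _ => rfl) fun _ _ _ => congrArg Prod.snd (Nat.unpair_pair _ _)

theorem effEqv_pathRefl : EffEqv (pathRefl g hg) := by
  refine ⟨pathFib g hg ≫ pullbackFst g hg, by rw [pathRefl_fst]; exact Y.idc, ?_⟩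
  refine hg.pairHom_finds (fun _ => rfl) (fun q => q.1.property) ?_ ?_ ?_ ?_ (Y.id_finds ?_)
    ((CompComputes.id _).right.toFinds fun q => q.2.property)
  · exact (CompComputes.id _).left.left
  · exact (CompComputes.id _).left.left
  · exact (CompComputes.id _).left.left
  · exact (CompComputes.id _).left.right
  · exact (CompComputes.id _).left.left

/-- Points of `pathObj` are transported along a cell `(μ, ν)` of `Y ×_X Y` by
conjugation `ρ ↦ ν ∘ ρ ∘ μ⁻¹`. -/
theorem effFib_pathFib : EffFib (pathFib g hg) := by
  obtain ⟨c, hc, cc⟩ := (Y.conj_finds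
    (fun x : {x : (pathObj g hg).A × (pullbackObj g hg).A × ℕ //
      x.2.2 ∈ (pullbackObj g hg).hom x.1.1 x.2.1} => x.2.fst)
    (fun x => x.1.1.2.property) (fun x => x.2.snd.fst)
    (CompComputes.id _).left.left.left (CompComputes.id _).right.left.left
    (CompComputes.id _).left.left.right (CompComputes.id _).right.left.right
    (CompComputes.id _).right.right.unpair_fst (CompComputes.id _).left.right
    (CompComputes.id _).right.right.unpair_snd).toComputes
  exact EffObj.effFib_inducedHom _ _ _ _ (fun x => ⟨x.1.2.1, c x, hc x⟩) (fun _ => rfl)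
    ((CompComputes.id _).right.left.pair cc)

theorem fibrewiseConnected_pathFib : EffFibrewiseConnected (pathFib g hg) :=
  EffObj.fibrewiseConnected_inducedHom _ _ _ _

theorem effEqv_pathFib (hc : EffFibrewiseConnected g) : EffEqv (pathFib g hg) := by
  obtain ⟨κ, hκ, cκ⟩ := hc.toComputes
  exact EffObj.effEqv_inducedHom _ _ _ _ (fun w => ⟨w, κ w, hκ w⟩) (fun _ => rfl)
    ((CompComputes.id _).pair cκ)

theorem isRelPathObj_pathObj : IsRelPathObj EffPS g (pathRefl g hg)
    (pathFib g hg ≫ pullbackFst g hg) (pathFib g hg ≫ pullbackSnd g hg) := by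
  refine ⟨effEqv_pathRefl g hg, pathRefl_fst g hg, pathRefl_snd g hg, ?_,
    _, _, _, pathFib g hg, isPB_pullbackObj g hg, rfl, rfl, effFib_pathFib g hg⟩
  simp only [Category.assoc, pullback_condition]

theorem isNTypeFib_succ_of_pathFib {n : ℕ} (h : IsNTypeFib EffPS n (pathFib g hg)) :
    IsNTypeFib EffPS (n + 1) g :=
  ⟨hg, _, _, pathRefl g hg, _, _, pullbackFst g hg, pullbackSnd g hg, pathFib g hg,
    isRelPathObj_pathObj g hg, isPB_pullbackObj g hg, rfl, rfl, h⟩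

end PathObject

theorem isNTypeFib_one_of_fibrewiseConnected {Y X : EffObj} {g : Y ⟶ X} (hg : EffFib g)
    (hc : EffFibrewiseConnected g) : IsNTypeFib EffPS 1 g :=
  isNTypeFib_succ_of_pathFib g hg ⟨effFib_pathFib g hg, effEqv_pathFib g hg hc⟩

/-- In the path category `EFF`, every fibration is a fibration of
sets (i.e. a fibration of 0-types; recall `IsNTypeFib S n` is "fibration of
`(n-2)`-types", so sets correspond to `n = 2`). -/
theorem EFF_every_fibration_is_fibration_of_sets {B A : EffObj} (f : B ⟶ A)
    (hf : EffFib f) : IsNTypeFib EffPS 2 f :=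
  isNTypeFib_succ_of_pathFib f hf <|
    isNTypeFib_one_of_fibrewiseConnected (effFib_pathFib f hf) (fibrewiseConnected_pathFib f hf)

end EffPaper
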